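/- Let v be a concave (reflex) vertex of a polygon with neighbouring vertices v₁ and v₂, let y₁ ∈ [v, v₁], y₂ ∈ [v, v₂] with ‖y₁−v‖ = ‖y₂−v‖ = δ > 0, and let x be an interior point of the polygon sufficiently close to v not lying on either of the lines through [v,v₁] or [v,v₂]. Let α₁(x), α₂(x) be the angles at x of the triangles [x, y₁, v] and [x, v, y₂], and τ₁(x), τ₂(x) ∈ {−1, 1} the signs of the signed distances of x to the lines through these segments (with respect to outward normals of the polygon). Then τ₁(x)α₁(x) + τ₂(x)α₂(x) = α_{[y₁,y₂]}(x), the angle at x of the triangle [x, y₁, y₂]. -/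

import Mathlib

/-!
Write `x = v + α • (y₁ - v) + γ • (y₂ - v)`. Near `v` the weight `1 - α - γ` of `v` is positive,
and `τ₁(x)`, `τ₂(x)` are the signs of `-γ`, `-α`. Off the exterior cone one of `α`, `γ` is
negative, so the relation `α • (y₁ - x) + (1 - α - γ) • (v - x) + γ • (y₂ - x) = 0` exhibits one
of the three rays from `x` as a positive combination of the other two, and unoriented angles
add across it.
-/

open Real EuclideanGeometry Topology

section Affine

variable {V P : Type*} [NormedAddCommGroup V] [InnerProductSpace ℝ V] [MetricSpace P]
  [NormedAddTorsor V P]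

theorem angle_add_angle_eq_of_smul_vsub_eq_smul_vsub_add_smul_vsub {a b c p : P} {α β γ : ℝ}
    (hα : 0 < α) (hβ : 0 < β) (hγ : 0 < γ) (hac : a ≠ c)
    (h : β • (b -ᵥ p) = α • (a -ᵥ p) + γ • (c -ᵥ p)) :
    ∠ a p b + ∠ b p c = ∠ a p c := by
  set x := AffineMap.lineMap a c (γ / (α + γ)) with hx
  have hsbtw : Sbtw ℝ a x c := sbtw_lineMap_iff.mpr
    ⟨hac, div_pos hγ (by positivity), (div_lt_one (by positivity)).mpr (by linarith)⟩
  have hxp : x -ᵥ p = (β / (α + γ)) • (b -ᵥ p) := by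
    rw [div_eq_inv_mul, mul_smul, h, hx, AffineMap.lineMap_apply, vadd_vsub_assoc,
      ← vsub_sub_vsub_cancel_right c a p]
    match_scalars <;> field_simp
    ring
  rcases eq_or_ne b p with rfl | hbp
  · have hxb : x = b := by rwa [vsub_self, smul_zero, vsub_eq_zero_iff_eq] at hxp
    rw [angle_self_right, angle_self_left, ← hxb, hsbtw.angle₁₂₃_eq_pi]
    ring
  · refine angle_add_angle_eq_of_sbtw_of_sameRay hsbtw ?_ hbp
    rw [hxp]
    exact sameRay_smul_left_iff.mpr (Or.inl (by positivity))

theorem sign_mul_angle_add_sign_mul_angle_eq_angle {a b c p : P} {α β γ : ℝ}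
    (hab : a ≠ b) (hac : a ≠ c) (hbc : b ≠ c) (hα : α ≠ 0) (hβ : 0 < β) (hγ : γ ≠ 0)
    (hneg : α < 0 ∨ γ < 0) (h : α • (a -ᵥ p) + β • (b -ᵥ p) + γ • (c -ᵥ p) = 0) :
    Real.sign (-γ) * ∠ a p b + Real.sign (-α) * ∠ b p c = ∠ a p c := by
  rcases hα.lt_or_gt with hα | hα <;> rcases hγ.lt_or_gt with hγ | hγ
  · rw [Real.sign_of_pos (neg_pos.mpr hγ), Real.sign_of_pos (neg_pos.mpr hα), one_mul, one_mul]
    exact angle_add_angle_eq_of_smul_vsub_eq_smul_vsub_add_smul_vsub (neg_pos.mpr hα) hβ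
      (neg_pos.mpr hγ) hac (by linear_combination (norm := module) h)
  · rw [Real.sign_of_neg (neg_lt_zero.mpr hγ), Real.sign_of_pos (neg_pos.mpr hα), one_mul]
    have := angle_add_angle_eq_of_smul_vsub_eq_smul_vsub_add_smul_vsub (a := b) (b := a)
      hβ (neg_pos.mpr hα) hγ hbc (by linear_combination (norm := module) -h)
    rw [angle_comm b p a] at this
    linarith
  · rw [Real.sign_of_pos (neg_pos.mpr hγ), Real.sign_of_neg (neg_lt_zero.mpr hα), one_mul]
    have := angle_add_angle_eq_of_smul_vsub_eq_smul_vsub_add_smul_vsub (b := c) (c := b)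
      hα (neg_pos.mpr hγ) hβ hab (by linear_combination (norm := module) -h)
    rw [angle_comm c p b] at this
    linarith
  · exact absurd hneg (not_or.mpr ⟨hα.not_gt, hγ.not_gt⟩)

theorem collinear_of_vsub_eq_smul_vsub {p₁ p₂ p₃ : P} {t : ℝ} (h : p₁ -ᵥ p₂ = t • (p₃ -ᵥ p₂)) :
    Collinear ℝ ({p₁, p₂, p₃} : Set P) :=
  collinear_insert_of_mem_affineSpan_pair <| by
    rw [← vsub_vadd p₁ p₂, vadd_left_mem_affineSpan_pair]
    exact ⟨t, h.symm⟩

theorem linearIndependent_vsub_of_not_collinear {p₁ p₂ p₃ : P}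
    (h : ¬Collinear ℝ ({p₁, p₂, p₃} : Set P)) : LinearIndependent ℝ ![p₁ -ᵥ p₂, p₃ -ᵥ p₂] := by
  refine (LinearIndependent.pair_iff' (vsub_ne_zero.mpr (ne₁₂_of_not_collinear h))).mpr ?_
  intro r hr
  have := collinear_of_vsub_eq_smul_vsub hr.symm
  rw [Set.pair_comm p₂ p₁, Set.insert_comm p₃ p₁, Set.pair_comm p₃ p₂] at this
  exact h this

end Affine

theorem LinearIndependent.eventually_exists_abs_lt_and_eq_smul_add_smul {V : Type*}
    [NormedAddCommGroup V] [NormedSpace ℝ V] (hV : Module.finrank ℝ V = 2) {u₁ u₂ : V}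
    (hu : LinearIndependent ℝ ![u₁, u₂]) {ε : ℝ} (hε : 0 < ε) :
    ∀ᶠ w in 𝓝 (0 : V), ∃ a b : ℝ, |a| < ε ∧ |b| < ε ∧ w = a • u₁ + b • u₂ := by
  have : FiniteDimensional ℝ V := Module.finite_of_finrank_eq_succ hV
  let e := basisOfLinearIndependentOfCardEqFinrank hu (by simp [hV])
  have he : ⇑e = ![u₁, u₂] := coe_basisOfLinearIndependentOfCardEqFinrank hu _
  have hcont := e.equivFunL.continuous.tendsto 0
  rw [map_zero] at hcont
  filter_upwards [hcont (Metric.ball_mem_nhds 0 hε)] with w hw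
  rw [Set.mem_preimage, mem_ball_zero_iff] at hw
  refine ⟨e.equivFun w 0, e.equivFun w 1, (norm_le_pi_norm _ 0).trans_lt hw,
    (norm_le_pi_norm _ 1).trans_lt hw, ?_⟩
  conv_lhs => rw [← e.sum_equivFun w]
  simp [Fin.sum_univ_two, he]

theorem real_inner_smul_add_smul_left_of_inner_eq_zero {V : Type*} [NormedAddCommGroup V]
    [InnerProductSpace ℝ V] {u₁ u₂ n : V} (α γ : ℝ) (hn : inner ℝ n u₁ = 0) :
    inner ℝ (α • u₁ + γ • u₂) n = γ * inner ℝ n u₂ := by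
  rw [real_inner_comm, inner_add_right, inner_smul_right, inner_smul_right, hn, mul_zero,
    zero_add]

theorem Real.sign_mul_of_pos_right (r : ℝ) {k : ℝ} (hk : 0 < k) :
    Real.sign (r * k) = Real.sign r := by
  rcases lt_trichotomy r 0 with h | rfl | h
  · rw [Real.sign_of_neg h, Real.sign_of_neg (mul_neg_of_neg_of_pos h hk)]
  · simp
  · rw [Real.sign_of_pos h, Real.sign_of_pos (mul_pos h hk)]

theorem concave_vertex_signed_angle_identity_general
    (v y₁ y₂ n₁ n₂ : EuclideanSpace ℝ (Fin 2))
    (hcol : ¬ Collinear ℝ ({y₁, v, y₂} : Set (EuclideanSpace ℝ (Fin 2))))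
    (hn₁perp : (inner ℝ n₁ (v - y₁) : ℝ) = 0)
    (hn₁out : (0 : ℝ) < inner ℝ n₁ (y₂ - v))
    (hn₂perp : (inner ℝ n₂ (y₂ - v) : ℝ) = 0)
    (hn₂out : (0 : ℝ) < inner ℝ n₂ (y₁ - v)) :
    ∃ r > 0, ∀ x : EuclideanSpace ℝ (Fin 2), ‖x - v‖ < r →
      x ∉ {p | ∃ s t : ℝ, 0 ≤ s ∧ 0 ≤ t ∧ p = v + s • (y₁ - v) + t • (y₂ - v)} →
      ¬ Collinear ℝ ({x, y₁, v} : Set (EuclideanSpace ℝ (Fin 2))) →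
      ¬ Collinear ℝ ({x, v, y₂} : Set (EuclideanSpace ℝ (Fin 2))) →
      Real.sign (inner ℝ (v - x) n₁) * EuclideanGeometry.angle y₁ x v +
        Real.sign (inner ℝ (v - x) n₂) * EuclideanGeometry.angle v x y₂ =
          EuclideanGeometry.angle y₁ x y₂ := by
  have hcoords := (linearIndependent_vsub_of_not_collinear hcol)
    |>.eventually_exists_abs_lt_and_eq_smul_add_smul finrank_euclideanSpace_fin (half_pos one_pos)
  obtain ⟨r, hr, hball⟩ := Metric.eventually_nhds_iff.mp
    (((continuous_sub_right v).tendsto' v 0 (sub_self v)).eventually hcoords)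
  refine ⟨r, hr, fun x hxr hcone hc₁ hc₂ => ?_⟩
  obtain ⟨α, γ, hα, hγ, hx⟩ := hball (by rwa [dist_eq_norm])
  simp only [vsub_eq_sub] at hx
  have hα0 : α ≠ 0 := by
    rintro rfl
    exact hc₂ (collinear_of_vsub_eq_smul_vsub (t := γ) (by simpa using hx))
  have hγ0 : γ ≠ 0 := by
    rintro rfl
    exact hc₁ (Set.pair_comm y₁ v ▸ collinear_of_vsub_eq_smul_vsub (t := α) (by simpa using hx))
  have hneg : α < 0 ∨ γ < 0 := by
    by_contra! h
    exact hcone ⟨α, γ, h.1, h.2, by linear_combination (norm := module) hx⟩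
  have hvx : v - x = (-α) • (y₁ - v) + (-γ) • (y₂ - v) := by
    linear_combination (norm := module) -hx
  have hτ₁ : inner ℝ (v - x) n₁ = -γ * inner ℝ n₁ (y₂ - v) := by
    rw [hvx, real_inner_smul_add_smul_left_of_inner_eq_zero _ _
      (by rw [← neg_sub, inner_neg_right, hn₁perp, neg_zero])]
  have hτ₂ : inner ℝ (v - x) n₂ = -α * inner ℝ n₂ (y₁ - v) := by
    rw [hvx, add_comm, real_inner_smul_add_smul_left_of_inner_eq_zero _ _ hn₂perp]
  rw [hτ₁, hτ₂, Real.sign_mul_of_pos_right _ hn₁out, Real.sign_mul_of_pos_right _ hn₂out]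
  refine sign_mul_angle_add_sign_mul_angle_eq_angle (ne₁₂_of_not_collinear hcol)
    (ne₁₃_of_not_collinear hcol) (ne₂₃_of_not_collinear hcol) hα0 (β := 1 - α - γ) ?_ hγ0 hneg ?_
  · linarith [abs_lt.mp hα, abs_lt.mp hγ]
  · simp only [vsub_eq_sub]
    linear_combination (norm := module) -hx

/-- At a concave (reflex) vertex `v` of a polygon, locally the exterior is the cone
spanned at `v` by the directions of the two adjacent edge points `y₁, y₂` (at distance
`δ` from `v`), and the outward unit normals `n₁, n₂` of the edges `[y₁,v]`, `[v,y₂]`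
point into this exterior cone. For any interior point `x` (i.e. off the closed
exterior cone) sufficiently close to `v`, not lying on either edge line,
`τ₁(x)·α₁(x) + τ₂(x)·α₂(x) = α_{[y₁,y₂]}(x)`, where `τⱼ(x)` is the sign of the
signed distance of `x` to the corresponding edge line and `αⱼ(x)` are the angles
at `x` of the triangles `[x,y₁,v]` and `[x,v,y₂]`. -/
theorem concave_vertex_signed_angle_identity
    (v y₁ y₂ n₁ n₂ : EuclideanSpace ℝ (Fin 2)) (δ : ℝ) (hδ : 0 < δ)
    (hd₁ : ‖y₁ - v‖ = δ) (hd₂ : ‖y₂ - v‖ = δ)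
    (hcol : ¬ Collinear ℝ ({y₁, v, y₂} : Set (EuclideanSpace ℝ (Fin 2))))
    (hn₁ : ‖n₁‖ = 1) (hn₁perp : (inner ℝ n₁ (v - y₁) : ℝ) = 0)
    (hn₁out : (0 : ℝ) < inner ℝ n₁ (y₂ - v))
    (hn₂ : ‖n₂‖ = 1) (hn₂perp : (inner ℝ n₂ (y₂ - v) : ℝ) = 0)
    (hn₂out : (0 : ℝ) < inner ℝ n₂ (y₁ - v)) :
    ∃ r > 0, ∀ x : EuclideanSpace ℝ (Fin 2), ‖x - v‖ < r →
      x ∉ {p | ∃ s t : ℝ, 0 ≤ s ∧ 0 ≤ t ∧ p = v + s • (y₁ - v) + t • (y₂ - v)} →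
      ¬ Collinear ℝ ({x, y₁, v} : Set (EuclideanSpace ℝ (Fin 2))) →
      ¬ Collinear ℝ ({x, v, y₂} : Set (EuclideanSpace ℝ (Fin 2))) →
      Real.sign (inner ℝ (v - x) n₁) * EuclideanGeometry.angle y₁ x v +
        Real.sign (inner ℝ (v - x) n₂) * EuclideanGeometry.angle v x y₂ =
          EuclideanGeometry.angle y₁ x y₂ :=
  concave_vertex_signed_angle_identity_general v y₁ y₂ n₁ n₂ hcol hn₁perp hn₁out hn₂perp hn₂out
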